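/- arXiv:1110.0333 — 5 statements merged into one kernel-verified Lean document; each statement's English description precedes it below -/
import Mathlib

section
/- Suppose {a_n}_{n=0}^∞ is a Stieltjes moment sequence with representing measure μ, κ is an integer ≥ 2, and {a_n^{1/κ}}_{n=0}^∞ is a Stieltjes moment sequence with representing measure ν. If {a_n}_{n=0}^∞ is determinate, then μ(E) = ν^{⊗κ}(π_κ^{-1}(E)) for every Borel subset E of [0,∞), where ν^{⊗κ} is the κ-fold product of the measure ν with itself. -/
open MeasureTheory

/-- The closed support of a Borel measure: the set of points all of whose open
neighbourhoods have positive measure. -/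
def msupport {X : Type*} [TopologicalSpace X] [MeasurableSpace X] (μ : Measure X) : Set X :=
  {x | ∀ U : Set X, IsOpen U → x ∈ U → 0 < μ U}

/-- `μ` is a representing measure (on `[0,∞)`, modelled as a measure on `ℝ` vanishing on
`(-∞,0)`) of the Stieltjes moment sequence `a`. -/
def IsRepMeas (a : ℕ → ℝ) (μ : Measure ℝ) : Prop :=
  (∀ n, 0 ≤ a n) ∧ μ (Set.Iio 0) = 0 ∧
    ∀ n : ℕ, ∫⁻ x, ENNReal.ofReal (x ^ n) ∂μ = ENNReal.ofReal (a n)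

/-- `a` is a Stieltjes moment sequence. -/
def IsStieltjes (a : ℕ → ℝ) : Prop :=
  ∃ μ : Measure ℝ, IsRepMeas a μ

/-- A Stieltjes moment sequence is determinate if it has a unique representing measure. -/
def IsDeterminate (a : ℕ → ℝ) : Prop :=
  ∀ μ ν : Measure ℝ, IsRepMeas a μ → IsRepMeas a ν → μ = ν

lemma lintegral_pi_prod {n : ℕ} (ν : Measure ℝ) [SigmaFinite ν] (g : ℝ → ENNReal)
    (hg : Measurable g) :
    ∫⁻ f, ∏ i, g (f i) ∂(Measure.pi fun _ : Fin n => ν) = (∫⁻ x, g x ∂ν) ^ n := by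
  induction n with
  | zero => simp
  | succ n ih =>
      have hmp := (measurePreserving_piFinSuccAbove (fun _ : Fin (n+1) => ν) 0).symm
      rw [← hmp.lintegral_comp_emb (MeasurableEquiv.measurableEmbedding _)]
      simp_rw [MeasurableEquiv.piFinSuccAbove_symm_apply, Fin.insertNthEquiv,
        Fin.prod_univ_succ, Fin.insertNth_zero]
      simp only [Fin.zero_succAbove, Equiv.coe_fn_mk, Function.comp_def, Fin.cons_zero,
        Fin.cons_succ]
      simp only [cast_eq]
      have hm : AEMeasurable (fun f : Fin n → ℝ => ∏ i, g (f i))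
          (Measure.pi fun _ : Fin n => ν) := by
        exact (Finset.measurable_prod Finset.univ (fun (i : Fin n) _ =>
          hg.comp (measurable_pi_apply i))).aemeasurable
      rw [lintegral_prod_mul hg.aemeasurable hm]
      rw [ih, pow_succ, mul_comm]
theorem stmt1 (a : ℕ → ℝ) (μ ν : Measure ℝ) (κ : ℕ) (hκ : 2 ≤ κ)
    (hμ : IsRepMeas a μ)
    (hν : IsRepMeas (fun n => a n ^ (1 / (κ : ℝ))) ν)
    (hdet : IsDeterminate a) :
    ∀ E : Set ℝ, MeasurableSet E →
      μ E = Measure.pi (fun _ : Fin κ => ν) ((fun f : Fin κ → ℝ => ∏ i, f i) ⁻¹' E) := by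
  have hπ : Measurable (fun f : Fin κ → ℝ => ∏ i, f i) :=
    Finset.measurable_prod _ fun i _ => measurable_pi_apply i
  -- ν is a finite measure
  have hν0 := hν.2.2 0
  simp only [pow_zero, ENNReal.ofReal_one, lintegral_one] at hν0
  haveI : IsFiniteMeasure ν := ⟨by rw [hν0]; exact ENNReal.ofReal_lt_top⟩
  set P := Measure.pi (fun _ : Fin κ => ν) with hP
  -- the negative-coordinate set is null
  have hN : P {f : Fin κ → ℝ | ∃ i, f i < 0} = 0 := by
    have : {f : Fin κ → ℝ | ∃ i, f i < 0} = ⋃ i, (Function.eval i) ⁻¹' (Set.Iio 0) := by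
      ext f; simp [Set.mem_iUnion, Function.eval]
    rw [this]
    exact measure_iUnion_null fun i => Measure.pi_eval_preimage_null _ hν.2.1
  have hκ' : (κ : ℝ) ≠ 0 := by positivity
  -- the pushforward is a representing measure for a
  have hrep : IsRepMeas a (P.map (fun f : Fin κ → ℝ => ∏ i, f i)) := by
    refine ⟨hμ.1, ?_, ?_⟩
    · rw [Measure.map_apply hπ measurableSet_Iio]
      refine measure_mono_null ?_ hN
      intro f hf
      by_contra h
      simp only [Set.mem_setOf_eq, not_exists, not_lt] at h
      exact absurd (Finset.prod_nonneg fun i _ => h i) (not_le.mpr hf)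
    · intro n
      have hgm : Measurable fun x : ℝ => ENNReal.ofReal (x ^ n) := by fun_prop
      rw [lintegral_map hgm hπ]
      have hae : (fun f : Fin κ → ℝ => ENNReal.ofReal ((∏ i, f i) ^ n))
          =ᵐ[P] fun f => ∏ i, ENNReal.ofReal ((f i) ^ n) := by
        have hmem : {f : Fin κ → ℝ | ∃ i, f i < 0}ᶜ ∈ ae P := by
          rw [mem_ae_iff, compl_compl]; exact hN
        refine Filter.eventuallyEq_of_mem hmem ?_
        intro f hf
        simp only [Set.mem_compl_iff, Set.mem_setOf_eq, not_exists, not_lt] at hf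
        simp only
        rw [← Finset.prod_pow, ENNReal.ofReal_prod_of_nonneg fun i _ => pow_nonneg (hf i) n]
      rw [lintegral_congr_ae hae, lintegral_pi_prod ν _ hgm, hν.2.2 n]
      have hb : (0:ℝ) ≤ a n ^ (1 / (κ : ℝ)) := Real.rpow_nonneg (hμ.1 n) _
      rw [← ENNReal.ofReal_pow hb]
      congr 1
      rw [← Real.rpow_natCast (a n ^ (1 / (κ : ℝ))) κ, ← Real.rpow_mul (hμ.1 n),
        one_div_mul_cancel hκ', Real.rpow_one]
  intro E hE
  rw [hdet μ _ hμ hrep, Measure.map_apply hπ hE]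
end

section
/- Suppose {a_n}_{n=0}^∞ is a Stieltjes moment sequence with representing measure μ, κ is an integer ≥ 2, {a_n^{1/κ}}_{n=0}^∞ is a Stieltjes moment sequence with representing measure ν, and {a_n}_{n=0}^∞ is determinate. Then (i) supp ν ⊆ {x ∈ [0,∞) : x^κ ∈ supp μ}; (ii) card(supp ν) ≤ card(supp μ); (iii) sup supp ν = (sup supp μ)^{1/κ} (with the convention that the κ-th root of ∞ is ∞). -/
/-!
Let `ν^{∗κ}` be the `κ`-fold multiplicative convolution of `ν`, the image of `ν^{⊗κ}` under
`(x₁, …, x_κ) ↦ x₁ ⋯ x_κ`. Its `n`-th moment is `(∫ xⁿ dν)^κ = aₙ`, so determinacy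
forces `μ = ν^{∗κ}`. Since `x ∈ supp ν` gives `x^κ ∈ supp ν^{∗κ}`, and `supp ν ⊆ [0, c]` gives
`supp ν^{∗κ} ⊆ [0, c^κ]`, all three assertions follow from the injectivity and monotonicity of
`x ↦ x^κ` on `[0, ∞)`.
-/

open MeasureTheory

open MeasureTheory Measure Set Filter Topology
open scoped ENNReal Pointwise

lemma msupport_eq_support {X : Type*} [TopologicalSpace X] [MeasurableSpace X] (μ : Measure X) :
    msupport μ = μ.support := by
  ext x
  rw [support_eq_forall_isOpen]
  exact forall_congr' fun _ => forall_comm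

lemma Ici_zero_mul_Ici_zero_subset : Ici (0 : ℝ) * Ici 0 ⊆ Ici 0 := by
  rintro _ ⟨x, hx, y, hy, rfl⟩
  exact mem_Ici.2 (mul_nonneg (mem_Ici.1 hx) (mem_Ici.1 hy))

namespace MeasureTheory.Measure

section Monoid

variable {M : Type*} [Monoid M] [MeasurableSpace M] {μ ν : Measure M}

noncomputable def mconvPow (ν : Measure M) : ℕ → Measure M
  | 0 => dirac 1
  | k + 1 => ν ∗ₘ mconvPow ν k

@[simp] lemma mconvPow_zero (ν : Measure M) : ν.mconvPow 0 = dirac 1 := rfl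

lemma mconvPow_succ (ν : Measure M) (k : ℕ) : ν.mconvPow (k + 1) = ν ∗ₘ ν.mconvPow k := rfl

instance [SFinite ν] (k : ℕ) : SFinite (ν.mconvPow k) := by
  induction k with
  | zero => rw [mconvPow_zero]; infer_instance
  | succ k ih => rw [mconvPow_succ]; infer_instance

lemma zero_mconvPow {k : ℕ} (hk : k ≠ 0) : (0 : Measure M).mconvPow k = 0 := by
  obtain ⟨k, rfl⟩ := Nat.exists_eq_succ_of_ne_zero hk
  exact zero_mconv _

variable [MeasurableMul₂ M]

lemma mem_ae_mconv [SFinite ν] {s t u : Set M} (hs : s ∈ ae μ) (ht : t ∈ ae ν)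
    (hu : MeasurableSet u) (hstu : s * t ⊆ u) : u ∈ ae (μ ∗ₘ ν) := by
  rw [mconv, mem_ae_map_iff (by fun_prop) hu]
  filter_upwards [measure_prod_compl_eq_zero hs ht] with p hp
  exact hstu (mul_mem_mul hp.1 hp.2)

lemma mem_ae_mconvPow [SFinite ν] {s : Set M} {t : ℕ → Set M} (hs : s ∈ ae ν)
    (ht : ∀ k, MeasurableSet (t k)) (ht₀ : 1 ∈ t 0) (hst : ∀ k, s * t k ⊆ t (k + 1)) :
    ∀ k, t k ∈ ae (ν.mconvPow k)
  | 0 => (mem_ae_dirac_iff (ht 0)).2 ht₀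
  | k + 1 => mem_ae_mconv hs (mem_ae_mconvPow hs ht ht₀ hst k) (ht _) (hst k)

lemma lintegral_mconv_of_ae_mul [SFinite ν] {f : M → ℝ≥0∞} (hf : Measurable f)
    (hmul : ∀ᵐ x ∂μ, ∀ᵐ y ∂ν, f (x * y) = f x * f y) :
    ∫⁻ z, f z ∂(μ ∗ₘ ν) = (∫⁻ x, f x ∂μ) * ∫⁻ y, f y ∂ν := by
  rw [lintegral_mconv hf, ← lintegral_mul_const _ hf]
  refine lintegral_congr_ae (hmul.mono fun x hx => ?_)
  dsimp only
  rw [lintegral_congr_ae hx, lintegral_const_mul _ hf]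

lemma lintegral_mconvPow [SFinite ν] {s : Set M} (hs : s ∈ ae ν) (hs_meas : MeasurableSet s)
    (hs_one : 1 ∈ s) (hs_mul : s * s ⊆ s) {f : M → ℝ≥0∞} (hf : Measurable f) (hf_one : f 1 = 1)
    (hf_mul : ∀ x ∈ s, ∀ y ∈ s, f (x * y) = f x * f y) :
    ∀ k, ∫⁻ z, f z ∂(ν.mconvPow k) = (∫⁻ x, f x ∂ν) ^ k
  | 0 => by simp [lintegral_dirac' _ hf, hf_one]
  | k + 1 => by
    have hs_pow : s ∈ ae (ν.mconvPow k) :=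
      mem_ae_mconvPow (t := fun _ => s) hs (fun _ => hs_meas) hs_one (fun _ => hs_mul) k
    rw [mconvPow_succ, lintegral_mconv_of_ae_mul hf, lintegral_mconvPow hs hs_meas hs_one hs_mul
      hf hf_one hf_mul k, pow_succ']
    filter_upwards [hs] with x hx
    filter_upwards [hs_pow] with y hy
    exact hf_mul x hx y hy

variable [TopologicalSpace M] [ContinuousMul M]

lemma mul_mem_support_mconv [SFinite ν] {x y : M} (hx : x ∈ μ.support) (hy : y ∈ ν.support) :
    x * y ∈ (μ ∗ₘ ν).support := by
  rw [mem_support_iff_forall] at *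
  intro U hU
  obtain ⟨u, hu, v, hv, huv⟩ := mem_nhds_prod_iff.1 (continuous_mul.tendsto (x, y) hU)
  calc 0 < μ u * ν v := ENNReal.mul_pos (hx u hu).ne' (hy v hv).ne'
    _ = μ.prod ν (u ×ˢ v) := (prod_prod u v).symm
    _ ≤ μ.prod ν ((fun p : M × M => p.1 * p.2) ⁻¹' U) := measure_mono huv
    _ ≤ (μ ∗ₘ ν) U := le_map_apply (by fun_prop) U

lemma pow_mem_support_mconvPow [SFinite ν] {x : M} (hx : x ∈ ν.support) :
    ∀ k, x ^ k ∈ (ν.mconvPow k).support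
  | 0 => by
    rw [pow_zero, mconvPow_zero, mem_support_iff_forall]
    intro U hU
    exact lt_of_lt_of_le (by simp [mem_of_mem_nhds hU]) le_dirac_apply
  | k + 1 => pow_succ' x k ▸ mul_mem_support_mconv hx (pow_mem_support_mconvPow hx k)

end Monoid

section Real

variable {ν : Measure ℝ}

lemma Ici_zero_mem_ae (hν : ν (Iio 0) = 0) : Ici 0 ∈ ae ν := by
  rwa [mem_ae_iff, compl_Ici]

lemma support_subset_Ici_zero (hν : ν (Iio 0) = 0) : ν.support ⊆ Ici 0 :=
  support_subset_of_isClosed isClosed_Ici (Ici_zero_mem_ae hν)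

variable [SFinite ν]

lemma Ici_zero_mem_ae_mconvPow (hν : ν (Iio 0) = 0) (k : ℕ) : Ici 0 ∈ ae (ν.mconvPow k) :=
  mem_ae_mconvPow (t := fun _ => Ici 0) (Ici_zero_mem_ae hν) (fun _ => measurableSet_Ici)
    (mem_Ici.2 zero_le_one) (fun _ => Ici_zero_mul_Ici_zero_subset) k

lemma lintegral_ofReal_pow_mconvPow (hν : ν (Iio 0) = 0) (n k : ℕ) :
    ∫⁻ x, ENNReal.ofReal (x ^ n) ∂(ν.mconvPow k) = (∫⁻ x, ENNReal.ofReal (x ^ n) ∂ν) ^ k :=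
  lintegral_mconvPow (Ici_zero_mem_ae hν) measurableSet_Ici (mem_Ici.2 zero_le_one)
    Ici_zero_mul_Ici_zero_subset (by fun_prop) (by simp)
    (fun x hx y _ => by rw [mul_pow, ENNReal.ofReal_mul (pow_nonneg hx n)]) k

lemma support_mconvPow_subset_Icc (hν : ν (Iio 0) = 0) {c : ℝ} (hc : 0 ≤ c)
    (hνc : ν.support ⊆ Iic c) (k : ℕ) : (ν.mconvPow k).support ⊆ Icc 0 (c ^ k) := by
  have hmem : Icc 0 c ∈ ae ν :=
    inter_mem (Ici_zero_mem_ae hν) (mem_of_superset support_mem_ae hνc)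
  refine support_subset_of_isClosed isClosed_Icc
    (mem_ae_mconvPow hmem (fun _ => measurableSet_Icc) (by simp) (fun k => ?_) k)
  rintro _ ⟨x, hx, y, hy, rfl⟩
  exact ⟨mul_nonneg hx.1 hy.1, pow_succ' c k ▸ mul_le_mul hx.2 hy.2 hy.1 hc⟩

variable {κ : ℕ}

lemma mk_support_le_mk_support_mconvPow (hν : ν (Iio 0) = 0) (hκ : κ ≠ 0) :
    Cardinal.mk ν.support ≤ Cardinal.mk (ν.mconvPow κ).support := by
  refine Cardinal.mk_le_of_injective
    (f := fun x => ⟨x.1 ^ κ, pow_mem_support_mconvPow x.2 κ⟩) fun x y hxy => Subtype.ext ?_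
  exact (pow_left_inj₀ (support_subset_Ici_zero hν x.2) (support_subset_Ici_zero hν y.2) hκ).1
    (congrArg Subtype.val hxy)

lemma bddAbove_support_mconvPow_iff (hν : ν (Iio 0) = 0) (hκ : κ ≠ 0) :
    BddAbove (ν.mconvPow κ).support ↔ BddAbove ν.support := by
  constructor
  · rintro ⟨M, hM⟩
    refine ⟨max 1 M, fun x hx => ?_⟩
    rcases le_or_gt x 1 with hx1 | hx1
    · exact le_max_of_le_left hx1
    · exact le_max_of_le_right
        ((le_self_pow₀ hx1.le hκ).trans (hM (pow_mem_support_mconvPow hx κ)))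
  · rintro ⟨M, hM⟩
    exact ⟨max M 0 ^ κ, fun y hy => (support_mconvPow_subset_Icc hν (le_max_right M 0)
      (fun x hx => le_max_of_le_left (hM hx)) κ hy).2⟩

lemma isLUB_support_mconvPow (hν : ν (Iio 0) = 0) (hκ : κ ≠ 0) {s : ℝ}
    (hs : IsLUB (ν.mconvPow κ).support s) : IsLUB ν.support (s ^ (κ⁻¹ : ℝ)) := by
  have hν_ne : ν ≠ 0 := by
    rintro rfl
    simpa [zero_mconvPow hκ] using hs.nonempty
  obtain ⟨x₀, hx₀⟩ := nonempty_support hν_ne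
  have hx₀_nonneg : 0 ≤ x₀ := support_subset_Ici_zero hν hx₀
  have hs_nonneg : 0 ≤ s :=
    (pow_nonneg hx₀_nonneg κ).trans (hs.1 (pow_mem_support_mconvPow hx₀ κ))
  constructor
  · intro x hx
    have hx_nonneg : 0 ≤ x := support_subset_Ici_zero hν hx
    calc x = (x ^ κ) ^ (κ⁻¹ : ℝ) := (Real.pow_rpow_inv_natCast hx_nonneg hκ).symm
      _ ≤ s ^ (κ⁻¹ : ℝ) := Real.rpow_le_rpow (pow_nonneg hx_nonneg κ)
          (hs.1 (pow_mem_support_mconvPow hx κ)) (by positivity)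
  · intro c hc
    have hc_nonneg : 0 ≤ c := hx₀_nonneg.trans (hc hx₀)
    have hsc : s ≤ c ^ κ :=
      hs.2 fun y hy => (support_mconvPow_subset_Icc hν hc_nonneg hc κ hy).2
    calc s ^ (κ⁻¹ : ℝ) ≤ (c ^ κ) ^ (κ⁻¹ : ℝ) := Real.rpow_le_rpow hs_nonneg hsc (by positivity)
      _ = c := Real.pow_rpow_inv_natCast hc_nonneg hκ

end Real

end MeasureTheory.Measure

lemma IsRepMeas.isFiniteMeasure {a : ℕ → ℝ} {ν : Measure ℝ} (hν : IsRepMeas a ν) :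
    IsFiniteMeasure ν := by
  have h := hν.2.2 0
  simp only [pow_zero, ENNReal.ofReal_one, lintegral_one] at h
  exact ⟨h ▸ ENNReal.ofReal_lt_top⟩

lemma IsRepMeas.mconvPow {a : ℕ → ℝ} {ν : Measure ℝ} {κ : ℕ} (hκ : κ ≠ 0) (ha : ∀ n, 0 ≤ a n)
    (hν : IsRepMeas (fun n => a n ^ (κ⁻¹ : ℝ)) ν) : IsRepMeas a (ν.mconvPow κ) := by
  have := hν.isFiniteMeasure
  refine ⟨ha, ?_, fun n => ?_⟩
  · simpa [mem_ae_iff] using Measure.Ici_zero_mem_ae_mconvPow hν.2.1 κ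
  · rw [Measure.lintegral_ofReal_pow_mconvPow hν.2.1, hν.2.2 n,
      ← ENNReal.ofReal_pow (Real.rpow_nonneg (ha n) _), Real.rpow_inv_natCast_pow (ha n) hκ]

theorem stmt4 (a : ℕ → ℝ) (μ ν : Measure ℝ) (κ : ℕ) (hκ : 2 ≤ κ)
    (hμ : IsRepMeas a μ)
    (hν : IsRepMeas (fun n => a n ^ (1 / (κ : ℝ))) ν)
    (hdet : IsDeterminate a) :
    msupport ν ⊆ {x : ℝ | 0 ≤ x ∧ x ^ κ ∈ msupport μ} ∧
    Cardinal.mk (msupport ν) ≤ Cardinal.mk (msupport μ) ∧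
    ((BddAbove (msupport μ) ↔ BddAbove (msupport ν)) ∧
      ∀ s : ℝ, IsLUB (msupport μ) s → IsLUB (msupport ν) (s ^ (1 / (κ : ℝ)))) := by
  have hκ₀ : κ ≠ 0 := by omega
  simp only [one_div] at hν ⊢
  have := hν.isFiniteMeasure
  obtain rfl : μ = ν.mconvPow κ := hdet μ _ hμ (hν.mconvPow hκ₀ hμ.1)
  have hν₀ : ν (Iio 0) = 0 := hν.2.1
  simp only [msupport_eq_support]
  exact ⟨fun x hx => ⟨support_subset_Ici_zero hν₀ hx, pow_mem_support_mconvPow hx κ⟩,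
    mk_support_le_mk_support_mconvPow hν₀ hκ₀, bddAbove_support_mconvPow_iff hν₀ hκ₀,
    fun _ => isLUB_support_mconvPow hν₀ hκ₀⟩
end

section
/- Let 0 < θ1 < θ2 < θ3 < ∞ be real numbers, set ι_s = 1 + ⌊log(θ3/θ1)/log(θ3/θ2)⌋ (so ι_s ≥ 2), and for each integer κ ≥ 2 set α†(κ) = (θ2/θ3)·θ3^{1/κ} and β†(κ) = θ1^{1/κ}. Then: (iv) α†(ι_s) < β†(ι_s); (v) the sequence {β†(κ) − α†(κ)}_{κ=ι_s}^∞ is strictly increasing provided that either θ1 ≤ 1, or θ1 > 1 and log θ1 ≤ (θ2/θ3)·log θ3. -/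
theorem stmt6 (θ1 θ2 θ3 : ℝ) (h1 : 0 < θ1) (h12 : θ1 < θ2) (h23 : θ2 < θ3)
    (ιs : ℤ) (hs : ιs = 1 + ⌊Real.log (θ3 / θ1) / Real.log (θ3 / θ2)⌋) :
    2 ≤ ιs ∧
    θ2 / θ3 * θ3 ^ (1 / (ιs : ℝ)) < θ1 ^ (1 / (ιs : ℝ)) ∧
    ((θ1 ≤ 1 ∨ (1 < θ1 ∧ Real.log θ1 ≤ θ2 / θ3 * Real.log θ3)) →
      ∀ k k' : ℤ, ιs ≤ k → k < k' →
        θ1 ^ (1 / (k : ℝ)) - θ2 / θ3 * θ3 ^ (1 / (k : ℝ)) <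
          θ1 ^ (1 / (k' : ℝ)) - θ2 / θ3 * θ3 ^ (1 / (k' : ℝ))) := by
  have h2 : 0 < θ2 := h1.trans h12
  have h3 : 0 < θ3 := h2.trans h23
  have h13 : θ1 < θ3 := h12.trans h23
  set c : ℝ := θ2 / θ3 with hc
  have hc0 : 0 < c := div_pos h2 h3
  have hc1 : c < 1 := (div_lt_one h3).mpr h23
  set L1 : ℝ := Real.log (θ3 / θ1) with hL1def
  set L2 : ℝ := Real.log (θ3 / θ2) with hL2def
  have hL2 : 0 < L2 := Real.log_pos ((one_lt_div h2).mpr h23)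
  have hL12 : L2 < L1 :=
    Real.log_lt_log (div_pos h3 h2) (div_lt_div_of_pos_left h3 h1 h12)
  have hr1 : 1 < L1 / L2 := (one_lt_div hL2).mpr hL12
  have hfloor : 1 ≤ ⌊L1 / L2⌋ := Int.le_floor.mpr (by exact_mod_cast hr1.le)
  have hsι : 2 ≤ ιs := by omega
  have hιpos : (0 : ℝ) < (ιs : ℝ) := by exact_mod_cast (by omega : (0:ℤ) < ιs)
  have hrι : L1 / L2 < (ιs : ℝ) := by
    have := Int.lt_floor_add_one (L1 / L2)
    rw [hs]; push_cast; linarith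
  -- key inequality: c < (θ1/θ3)^(1/ιs)
  have hkey0 : c < (θ1 / θ3) ^ (1 / (ιs : ℝ)) := by
    have hL1eq : Real.log (θ1 / θ3) = -L1 := by
      rw [hL1def, Real.log_div h3.ne' h1.ne', Real.log_div h1.ne' h3.ne']; ring
    have hlogc : Real.log c = -L2 := by
      rw [hc, hL2def, Real.log_div h3.ne' h2.ne', Real.log_div h2.ne' h3.ne']; ring
    have h13d : (0 : ℝ) < θ1 / θ3 := div_pos h1 h3
    rw [Real.rpow_def_of_pos h13d, hL1eq]
    have hL1lt : L1 < (ιs : ℝ) * L2 := (div_lt_iff₀ hL2).mp hrι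
    have hdiv : L1 / (ιs : ℝ) < L2 := (div_lt_iff₀ hιpos).mpr (by linarith)
    calc c = Real.exp (Real.log c) := (Real.exp_log hc0).symm
      _ < Real.exp (-L1 * (1 / (ιs : ℝ))) := by
          apply Real.exp_lt_exp.mpr
          rw [hlogc]
          have heq : -L1 * (1 / (ιs : ℝ)) = -(L1 / (ιs : ℝ)) := by ring
          rw [heq]
          linarith
  have hiv : ∀ x : ℝ, 0 < x → x ≤ 1 / (ιs : ℝ) → c * θ3 ^ x < θ1 ^ x := by
    intro x hx hxle
    have h13d : (0 : ℝ) < θ1 / θ3 := div_pos h1 h3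
    have hle : (θ1 / θ3) ^ (1 / (ιs : ℝ)) ≤ (θ1 / θ3) ^ x :=
      Real.rpow_le_rpow_of_exponent_ge h13d ((div_lt_one h3).mpr h13).le hxle
    have hclt : c < (θ1 / θ3) ^ x := hkey0.trans_le hle
    have h3x : (0 : ℝ) < θ3 ^ x := Real.rpow_pos_of_pos h3 x
    calc c * θ3 ^ x < (θ1 / θ3) ^ x * θ3 ^ x := by
          exact mul_lt_mul_of_pos_right hclt h3x
      _ = θ1 ^ x := by
          rw [Real.div_rpow h1.le h3.le, div_mul_cancel₀ _ h3x.ne']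
  refine ⟨hsι, hiv (1 / (ιs : ℝ)) (by positivity) le_rfl, ?_⟩
  intro hcond k k' hk hkk'
  have hkpos : (0 : ℝ) < (k : ℝ) := by exact_mod_cast (by omega : (0:ℤ) < k)
  have hk'pos : (0 : ℝ) < (k' : ℝ) := by exact_mod_cast (by omega : (0:ℤ) < k')
  have hlt : 1 / (k' : ℝ) < 1 / (k : ℝ) :=
    one_div_lt_one_div_of_lt hkpos (by exact_mod_cast hkk')
  have hle : 1 / (k : ℝ) ≤ 1 / (ιs : ℝ) :=
    one_div_le_one_div_of_le hιpos (by exact_mod_cast hk)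
  set f : ℝ → ℝ := fun x => θ1 ^ x - c * θ3 ^ x with hf
  have hder : ∀ x : ℝ, HasDerivAt f
      (θ1 ^ x * Real.log θ1 - c * (θ3 ^ x * Real.log θ3)) x := by
    intro x
    exact ((Real.hasStrictDerivAt_const_rpow h1 x).hasDerivAt).sub
      (((Real.hasStrictDerivAt_const_rpow h3 x).hasDerivAt).const_mul c)
  have hanti : StrictAntiOn f (Set.Icc (1 / (k' : ℝ)) (1 / (ιs : ℝ))) := by
    apply strictAntiOn_of_deriv_neg (convex_Icc _ _)
    · exact fun x _ => (hder x).continuousAt.continuousWithinAt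
    · intro x hx
      rw [interior_Icc] at hx
      obtain ⟨hx0, hx1⟩ := hx
      have hxpos : 0 < x := lt_trans (by positivity) hx0
      have hkeyx : c * θ3 ^ x < θ1 ^ x := hiv x hxpos hx1.le
      rw [(hder x).deriv]
      rcases hcond with h1le | ⟨h1gt, hcl⟩
      · have hlog1 : Real.log θ1 ≤ 0 := Real.log_nonpos h1.le h1le
        have step1 : θ1 ^ x * Real.log θ1 ≤ c * θ3 ^ x * Real.log θ1 :=
          mul_le_mul_of_nonpos_right hkeyx.le hlog1
        have step2 : c * θ3 ^ x * Real.log θ1 < c * θ3 ^ x * Real.log θ3 :=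
          mul_lt_mul_of_pos_left (Real.log_lt_log h1 h13)
            (mul_pos hc0 (Real.rpow_pos_of_pos h3 x))
        nlinarith [step1, step2]
      · have hlog3 : 0 < Real.log θ3 := Real.log_pos (h1gt.trans h13)
        have h1x3x : θ1 ^ x < θ3 ^ x := Real.rpow_lt_rpow h1.le h13 hxpos
        have h1xpos : (0 : ℝ) < θ1 ^ x := Real.rpow_pos_of_pos h1 x
        have step1 : θ1 ^ x * Real.log θ1 ≤ θ1 ^ x * (c * Real.log θ3) :=
          mul_le_mul_of_nonneg_left hcl h1xpos.le
        have step2 : θ1 ^ x * (c * Real.log θ3) < θ3 ^ x * (c * Real.log θ3) :=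
          mul_lt_mul_of_pos_right h1x3x (mul_pos hc0 hlog3)
        nlinarith [step1, step2]
  have := hanti ⟨le_rfl, hlt.le.trans hle⟩ ⟨hlt.le, hle⟩ hlt
  simpa [hf] using this
end

section
/- Let θ1, θ2, θ3 be real numbers with 0 < θ1 < θ2 < θ3, and set ι_s = 1 + ⌊log(θ3/θ1)/log(θ3/θ2)⌋ and ι_s* = 1 + ⌊log(θ3/θ2)/log(θ2/θ1)⌋. Then: (i) ι_s = 2 implies ι_s* ≥ 2; (ii) ι_s = 3 implies ι_s* ∈ {1,2}; (iii) (ι_s = 3 and ι_s* = 2) if and only if θ1·θ3 = θ2²; (iv) ι_s ≥ 4 implies ι_s* = 1; (v) ι_s* = 1 if and only if θ1·θ3 < θ2²; (vi) ι_s* = 1 implies ι_s ≥ 3; (vii) ι_s* = 2 implies ι_s ∈ {2,3}; (viii) ι_s* ≥ 3 implies ι_s = 2. Moreover, for every integer p ≥ 2 there exist real numbers 0 < θ1 < θ2 < θ3 with ι_s = 2 and ι_s* = p. -/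
theorem stmt13 (θ1 θ2 θ3 : ℝ) (h1 : 0 < θ1) (h12 : θ1 < θ2) (h23 : θ2 < θ3)
    (ιs ιss : ℤ)
    (hs : ιs = 1 + ⌊Real.log (θ3 / θ1) / Real.log (θ3 / θ2)⌋)
    (hss : ιss = 1 + ⌊Real.log (θ3 / θ2) / Real.log (θ2 / θ1)⌋) :
    (ιs = 2 → 2 ≤ ιss) ∧
    (ιs = 3 → ιss = 1 ∨ ιss = 2) ∧
    ((ιs = 3 ∧ ιss = 2) ↔ θ1 * θ3 = θ2 ^ 2) ∧
    (4 ≤ ιs → ιss = 1) ∧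
    (ιss = 1 ↔ θ1 * θ3 < θ2 ^ 2) ∧
    (ιss = 1 → 3 ≤ ιs) ∧
    (ιss = 2 → ιs = 2 ∨ ιs = 3) ∧
    (3 ≤ ιss → ιs = 2) ∧
    (∀ p : ℤ, 2 ≤ p → ∃ t1 t2 t3 : ℝ, 0 < t1 ∧ t1 < t2 ∧ t2 < t3 ∧
      1 + ⌊Real.log (t3 / t1) / Real.log (t3 / t2)⌋ = 2 ∧
      1 + ⌊Real.log (t3 / t2) / Real.log (t2 / t1)⌋ = p) := by
  have h2 : 0 < θ2 := h1.trans h12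
  have h3 : 0 < θ3 := h2.trans h23
  set a := Real.log (θ2 / θ1) with hadef
  set b := Real.log (θ3 / θ2) with hbdef
  have ha : 0 < a := Real.log_pos ((one_lt_div h1).2 h12)
  have hb : 0 < b := Real.log_pos ((one_lt_div h2).2 h23)
  have hsum : Real.log (θ3 / θ1) = a + b := by
    rw [hadef, hbdef, Real.log_div h3.ne' h1.ne', Real.log_div h2.ne' h1.ne',
      Real.log_div h3.ne' h2.ne']; ring
  have hs' : ιs = 2 + ⌊a / b⌋ := by
    rw [hs, hsum]
    have : (a + b) / b = a / b + 1 := by field_simp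
    rw [this, Int.floor_add_one]; ring
  -- basic floor facts
  have hfle : (↑⌊a / b⌋ : ℝ) ≤ a / b := Int.floor_le _
  have hflt : a / b < ⌊a / b⌋ + 1 := Int.lt_floor_add_one _
  have hgle : (↑⌊b / a⌋ : ℝ) ≤ b / a := Int.floor_le _
  have hglt : b / a < ⌊b / a⌋ + 1 := Int.lt_floor_add_one _
  have hfnn : 0 ≤ ⌊a / b⌋ := Int.floor_nonneg.2 (div_nonneg ha.le hb.le)
  have hgnn : 0 ≤ ⌊b / a⌋ := Int.floor_nonneg.2 (div_nonneg hb.le ha.le)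
  -- translation of inequalities between a,b and the θ's
  have hlt : b < a ↔ θ1 * θ3 < θ2 ^ 2 := by
    rw [hbdef, hadef, Real.log_lt_log_iff (div_pos h3 h2), div_lt_div_iff₀ h2 h1]
    · constructor <;> intro h <;> nlinarith
    · exact div_pos h2 h1
  have hlt' : a < b ↔ θ2 ^ 2 < θ1 * θ3 := by
    rw [hbdef, hadef, Real.log_lt_log_iff (div_pos h2 h1), div_lt_div_iff₀ h1 h2]
    · constructor <;> intro h <;> nlinarith
    · exact div_pos h3 h2
  have heq : a = b ↔ θ1 * θ3 = θ2 ^ 2 := by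
    constructor
    · intro h
      by_contra hne
      rcases lt_or_gt_of_ne hne with hc | hc
      · have := hlt.2 hc; linarith
      · have := hlt'.2 hc; linarith
    · intro h
      by_contra hne
      rcases lt_or_gt_of_ne hne with hc | hc
      · have := hlt'.1 hc; linarith
      · have := hlt.1 hc; linarith
  refine ⟨?_, ?_, ?_, ?_, ?_, ?_, ?_, ?_, ?_⟩
  · -- ιs = 2 → 2 ≤ ιss
    intro h
    have hf : ⌊a / b⌋ = 0 := by omega
    have hab : a < b := by
      have : a / b < 1 := by rw [hf] at hflt; simpa using hflt
      exact (div_lt_one hb).1 this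
    have hg : 1 ≤ ⌊b / a⌋ := Int.le_floor.2 (by
      push_cast; exact (one_le_div ha).2 hab.le)
    omega
  · -- ιs = 3 → ιss = 1 ∨ ιss = 2
    intro h
    have hf : ⌊a / b⌋ = 1 := by omega
    have hba : b ≤ a := by
      have : (1 : ℝ) ≤ a / b := by rw [hf] at hfle; simpa using hfle
      exact (one_le_div hb).1 this
    have hg : ⌊b / a⌋ ≤ 1 := by
      have h1' : b / a ≤ 1 := (div_le_one ha).2 hba
      have := hgle.trans h1'
      exact_mod_cast this
    omega
  · -- (ιs = 3 ∧ ιss = 2) ↔ θ1 * θ3 = θ2 ^ 2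
    constructor
    · rintro ⟨hA, hB⟩
      have hf : ⌊a / b⌋ = 1 := by omega
      have hg : ⌊b / a⌋ = 1 := by omega
      have hba : b ≤ a := by
        have : (1 : ℝ) ≤ a / b := by rw [hf] at hfle; simpa using hfle
        exact (one_le_div hb).1 this
      have hab : a ≤ b := by
        have : (1 : ℝ) ≤ b / a := by rw [hg] at hgle; simpa using hgle
        exact (one_le_div ha).1 this
      exact heq.1 (le_antisymm hab hba)
    · intro h
      have hab : a = b := heq.2 h
      have hf : ⌊a / b⌋ = 1 := by
        rw [hab, div_self hb.ne']; exact Int.floor_one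
      have hg : ⌊b / a⌋ = 1 := by
        rw [hab, div_self hb.ne']; exact Int.floor_one
      omega
  · -- 4 ≤ ιs → ιss = 1
    intro h
    have hf : 2 ≤ ⌊a / b⌋ := by omega
    have hba : 2 * b ≤ a := by
      have : (2 : ℝ) ≤ a / b := by
        have : ((2 : ℤ) : ℝ) ≤ ⌊a / b⌋ := by exact_mod_cast hf
        push_cast at this; linarith
      rw [le_div_iff₀ hb] at this; linarith
    have hg : ⌊b / a⌋ = 0 := by
      have h1' : b / a < 1 := (div_lt_one ha).2 (by linarith)
      have := hgle.trans_lt h1'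
      have : ⌊b / a⌋ < 1 := by exact_mod_cast this
      omega
    omega
  · -- ιss = 1 ↔ θ1 * θ3 < θ2 ^ 2
    rw [← hlt]
    constructor
    · intro h
      have hg : ⌊b / a⌋ = 0 := by omega
      have : b / a < 1 := by rw [hg] at hglt; simpa using hglt
      exact (div_lt_one ha).1 this
    · intro h
      have hg : ⌊b / a⌋ = 0 := by
        have h1' : b / a < 1 := (div_lt_one ha).2 h
        have := hgle.trans_lt h1'
        have : ⌊b / a⌋ < 1 := by exact_mod_cast this
        omega
      omega
  · -- ιss = 1 → 3 ≤ ιs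
    intro h
    have hg : ⌊b / a⌋ = 0 := by omega
    have hba : b < a := by
      have : b / a < 1 := by rw [hg] at hglt; simpa using hglt
      exact (div_lt_one ha).1 this
    have hf : 1 ≤ ⌊a / b⌋ := Int.le_floor.2 (by
      push_cast; exact (one_le_div hb).2 hba.le)
    omega
  · -- ιss = 2 → ιs = 2 ∨ ιs = 3
    intro h
    have hg : ⌊b / a⌋ = 1 := by omega
    have hab : a ≤ b := by
      have : (1 : ℝ) ≤ b / a := by rw [hg] at hgle; simpa using hgle
      exact (one_le_div ha).1 this
    have hf : ⌊a / b⌋ ≤ 1 := by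
      have h1' : a / b ≤ 1 := (div_le_one hb).2 hab
      have := hfle.trans h1'
      exact_mod_cast this
    omega
  · -- 3 ≤ ιss → ιs = 2
    intro h
    have hg : 2 ≤ ⌊b / a⌋ := by omega
    have hab : 2 * a ≤ b := by
      have h2' : (2 : ℝ) ≤ b / a := by
        have : ((2 : ℤ) : ℝ) ≤ ⌊b / a⌋ := by exact_mod_cast hg
        push_cast at this; linarith
      rw [le_div_iff₀ ha] at h2'; linarith
    have hf : ⌊a / b⌋ = 0 := by
      have h1' : a / b < 1 := (div_lt_one hb).2 (by linarith)
      have := hfle.trans_lt h1'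
      have : ⌊a / b⌋ < 1 := by exact_mod_cast this
      omega
    omega
  · -- existence
    intro p hp
    have hp' : (2 : ℝ) ≤ (p : ℝ) := by exact_mod_cast hp
    refine ⟨1, Real.exp 1, Real.exp ((p : ℝ) + 1 / 2), one_pos, ?_, ?_, ?_, ?_⟩
    · calc (1 : ℝ) = Real.exp 0 := Real.exp_zero.symm
        _ < Real.exp 1 := Real.exp_lt_exp.2 one_pos
    · exact Real.exp_lt_exp.2 (by linarith)
    · have e1 : Real.exp ((p : ℝ) + 1 / 2) / 1 = Real.exp ((p : ℝ) + 1 / 2) := div_one _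
      have e2 : Real.exp ((p : ℝ) + 1 / 2) / Real.exp 1 = Real.exp ((p : ℝ) - 1 / 2) := by
        rw [← Real.exp_sub]; ring_nf
      rw [e1, e2, Real.log_exp, Real.log_exp]
      have hden : (0 : ℝ) < (p : ℝ) - 1 / 2 := by linarith
      have hfl : ⌊((p : ℝ) + 1 / 2) / ((p : ℝ) - 1 / 2)⌋ = 1 := by
        rw [Int.floor_eq_iff]
        constructor
        · push_cast
          rw [le_div_iff₀ hden]; linarith
        · push_cast
          rw [div_lt_iff₀ hden]; linarith
      rw [hfl]
      norm_num
    · have e2 : Real.exp ((p : ℝ) + 1 / 2) / Real.exp 1 = Real.exp ((p : ℝ) - 1 / 2) := by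
        rw [← Real.exp_sub]; ring_nf
      have e3 : Real.exp 1 / 1 = Real.exp 1 := div_one _
      rw [e2, e3, Real.log_exp, Real.log_exp, div_one]
      have hfl : ⌊(p : ℝ) - 1 / 2⌋ = p - 1 := by
        rw [Int.floor_eq_iff]
        constructor
        · push_cast; linarith
        · push_cast; linarith
      rw [hfl]; ring
end

section
/- Let θ1, θ2, θ3 be real numbers with 0 < θ1 < θ2 < θ3, let κ be an integer ≥ 2, and set α = (θ1/θ3)·θ3^{1/κ}, β = θ2^{1/κ}, γ = θ3^{1/κ}, α† = (θ2/θ3)·θ3^{1/κ}, β† = θ1^{1/κ}, ι_s = 1 + ⌊log(θ3/θ1)/log(θ3/θ2)⌋ and ι_s* = 1 + ⌊log(θ3/θ2)/log(θ2/θ1)⌋. Then: (i) if α† = β† and κ ≥ 3, then ι_s* = 1; (ii) if κ = 2, then α† = β† if and only if ι_s = 3 and ι_s* = 2; (iii) if κ ≥ ι_s*, then (γ/β)·α < α†. -/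
theorem stmt14 (θ1 θ2 θ3 : ℝ) (h1 : 0 < θ1) (h12 : θ1 < θ2) (h23 : θ2 < θ3)
    (κ : ℕ) (hκ : 2 ≤ κ)
    (α β γ αd βd : ℝ)
    (hα : α = θ1 / θ3 * θ3 ^ (1 / (κ : ℝ)))
    (hβ : β = θ2 ^ (1 / (κ : ℝ)))
    (hγ : γ = θ3 ^ (1 / (κ : ℝ)))
    (hαd : αd = θ2 / θ3 * θ3 ^ (1 / (κ : ℝ)))
    (hβd : βd = θ1 ^ (1 / (κ : ℝ)))
    (ιs ιss : ℤ)
    (hs : ιs = 1 + ⌊Real.log (θ3 / θ1) / Real.log (θ3 / θ2)⌋)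
    (hss : ιss = 1 + ⌊Real.log (θ3 / θ2) / Real.log (θ2 / θ1)⌋) :
    ((αd = βd ∧ 3 ≤ κ) → ιss = 1) ∧
    (κ = 2 → (αd = βd ↔ (ιs = 3 ∧ ιss = 2))) ∧
    (ιss ≤ (κ : ℤ) → γ / β * α < αd) := by
  have h2 : 0 < θ2 := h1.trans h12
  have h3 : 0 < θ3 := h2.trans h23
  have hκ0 : (0:ℝ) < (κ:ℝ) := by exact_mod_cast (by omega : 0 < κ)
  have hm : 0 < Real.log (θ3 / θ2) := Real.log_pos ((one_lt_div h2).mpr h23)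
  have hp : 0 < Real.log (θ2 / θ1) := Real.log_pos ((one_lt_div h1).mpr h12)
  set m := Real.log (θ3 / θ2) with hmdef
  set p := Real.log (θ2 / θ1) with hpdef
  have hmval : m = Real.log θ3 - Real.log θ2 := Real.log_div h3.ne' h2.ne'
  have hpval : p = Real.log θ2 - Real.log θ1 := Real.log_div h2.ne' h1.ne'
  have hL : Real.log (θ3 / θ1) = m + p := by
    rw [Real.log_div h3.ne' h1.ne', hmval, hpval]; ring
  -- positivity of defined quantities
  have hαd_pos : 0 < αd := by rw [hαd]; positivity
  have hβd_pos : 0 < βd := by rw [hβd]; positivity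
  -- logs of αd, βd
  have hlogαd : Real.log αd = Real.log θ2 - Real.log θ3 + (1 / κ) * Real.log θ3 := by
    rw [hαd, Real.log_mul (by positivity) (by positivity), Real.log_div h2.ne' h3.ne',
      Real.log_rpow h3]
  have hlogβd : Real.log βd = (1 / κ) * Real.log θ1 := by
    rw [hβd, Real.log_rpow h1]
  -- key characterization
  have hkey : αd = βd ↔ (κ : ℝ) * m = m + p := by
    constructor
    · intro h
      have hl : Real.log αd = Real.log βd := by rw [h]
      rw [hlogαd, hlogβd] at hl
      field_simp at hl
      rw [hmval, hpval]
      linarith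
    · intro h
      have hl : Real.log αd = Real.log βd := by
        rw [hlogαd, hlogβd, hmval, hpval] at *
        field_simp
        linarith
      calc αd = Real.exp (Real.log αd) := (Real.exp_log hαd_pos).symm
        _ = Real.exp (Real.log βd) := by rw [hl]
        _ = βd := Real.exp_log hβd_pos
  refine ⟨?_, ?_, ?_⟩
  · rintro ⟨heq, h3κ⟩
    have hk : (κ : ℝ) * m = m + p := hkey.mp heq
    have h3κ' : (3:ℝ) ≤ (κ:ℝ) := by exact_mod_cast h3κ
    have hmp : m < p := by nlinarith
    have : ⌊m / p⌋ = 0 := by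
      rw [Int.floor_eq_zero_iff]
      constructor
      · positivity
      · rw [div_lt_one hp]; exact hmp
    rw [hss, this]; norm_num
  · intro hκ2
    subst hκ2
    rw [hkey]
    constructor
    · intro hk
      push_cast at hk
      have hmp : m = p := by linarith
      have h1' : ⌊Real.log (θ3 / θ1) / m⌋ = 2 := by
        rw [hL, hmp]
        have : (p + p) / p = 2 := by field_simp; ring
        rw [this]; exact Int.floor_intCast 2
      have h2' : ⌊m / p⌋ = 1 := by
        rw [hmp, div_self hp.ne']; exact Int.floor_one
      constructor
      · rw [hs, h1']; norm_num
      · rw [hss, h2']; norm_num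
    · rintro ⟨hi1, hi2⟩
      have hf1 : ⌊Real.log (θ3 / θ1) / m⌋ = 2 := by omega
      have hf2 : ⌊m / p⌋ = 1 := by omega
      have hge2 : (2:ℝ) ≤ Real.log (θ3 / θ1) / m := by
        have := hf1 ▸ Int.floor_le (Real.log (θ3 / θ1) / m)
        exact_mod_cast this
      have hge1 : (1:ℝ) ≤ m / p := by
        have := hf2 ▸ Int.floor_le (m / p)
        exact_mod_cast this
      rw [hL, le_div_iff₀ hm] at hge2
      rw [le_div_iff₀ hp] at hge1
      push_cast
      linarith
  · intro hle
    have hfl : m / p < (κ : ℝ) := by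
      have h1' : m / p < (⌊m / p⌋ : ℝ) + 1 := Int.lt_floor_add_one _
      have h2' : ((⌊m / p⌋ : ℤ) : ℝ) + 1 ≤ (κ : ℝ) := by
        have : (1 + ⌊m / p⌋ : ℤ) ≤ (κ : ℤ) := hss ▸ hle
        exact_mod_cast by linarith [this]
      linarith
    have hmain : m / (κ : ℝ) < p := by
      rw [div_lt_iff₀ hκ0]
      rw [div_lt_iff₀ hp] at hfl
      linarith
    have hlhs_pos : 0 < γ / β * α := by rw [hγ, hβ, hα]; positivity
    rw [← Real.exp_log hlhs_pos, ← Real.exp_log hαd_pos, Real.exp_lt_exp]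
    have hlog1 : Real.log (γ / β * α) = (1/κ) * Real.log θ3 - (1/κ) * Real.log θ2
        + (Real.log θ1 - Real.log θ3 + (1/κ) * Real.log θ3) := by
      rw [hγ, hβ, hα, Real.log_mul (by positivity) (by positivity),
        Real.log_div (by positivity) (by positivity),
        Real.log_mul (by positivity) (by positivity),
        Real.log_div h1.ne' h3.ne', Real.log_rpow h3, Real.log_rpow h2]
    rw [hlog1, hlogαd]
    have hexp : (1/(κ:ℝ)) * Real.log θ3 - (1/κ) * Real.log θ2 = m / κ := by
      rw [hmval]; ring
    have hexp2 : Real.log θ2 - Real.log θ1 = p := hpval.symm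
    nlinarith [hexp, hexp2, hmain]
end
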